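/- Let 𝒞 be a Z2Z4-additive code and let 𝒮 be the additive subgroup of Z2^α × Z4^β generated by 𝒞 together with all elements 2(u*v) for u, v ∈ 𝒞. Then Φ(𝒮) = ⟨Φ(𝒞)⟩, the linear span of Φ(𝒞) in Z2^(α+2β); in particular, the linear span of a Z2Z4-linear code is again a Z2Z4-linear code. -/

import Mathlib

/-! Componentwise, the Gray map satisfies `Φ(u + v) = Φ(u) + Φ(v) + Φ(2(u*v))`, and `2(u*v)` is
killed by `2` because `4 = 0`. Hence `Φ(u) + Φ(v) = Φ(u + v + 2(u*v))`, so the Gray image of an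
additive subgroup closed under `(s, t) ↦ 2(s*t)` is a binary subspace; `𝒮` is such a subgroup,
which gives `⟨Φ(𝒞)⟩ ⊆ Φ(𝒮)`. Conversely `𝒮 = 𝒞 + ⟨2(u*v)⟩` with the second summand 2-torsion, on
which `Φ` is additive, and `Φ(2(u*v)) = Φ(u + v) + Φ(u) + Φ(v) ∈ ⟨Φ(𝒞)⟩`. -/

/-- The ambient group `Z2^α × Z4^β`, with componentwise ring structure
(so `u * v` is the componentwise product). -/
abbrev Amb (α β : ℕ) := (Fin α → ZMod 2) × (Fin β → ZMod 4)

/-- The binary space `Z2^α × (Z2²)^β ≅ Z2^(α+2β)`. -/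
abbrev Bin (α β : ℕ) := (Fin α → ZMod 2) × (Fin β → ZMod 2 × ZMod 2)

/-- The Gray map `φ : Z4 → Z2²` with `φ(0)=(0,0), φ(1)=(0,1), φ(2)=(1,1), φ(3)=(1,0)`. -/
def grayPair (y : ZMod 4) : ZMod 2 × ZMod 2 :=
  match y.val with
  | 0 => (0, 0)
  | 1 => (0, 1)
  | 2 => (1, 1)
  | _ => (1, 0)

/-- The extended Gray map `Φ : Z2^α × Z4^β → Z2^(α+2β)`. -/
def Phi {α β : ℕ} (u : Amb α β) : Bin α β :=
  (u.1, fun i => grayPair (u.2 i))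

/-- The kernel `K(C) = {x | x + C = C}` of a binary code. -/
def kernelK {α β : ℕ} (C : Set (Bin α β)) : Set (Bin α β) :=
  {x | (fun y => x + y) '' C = C}

/-- The rank of a binary code: the `Z2`-dimension of its linear span. -/
noncomputable def rankOf {α β : ℕ} (C : Set (Bin α β)) : ℕ :=
  Module.finrank (ZMod 2) (Submodule.span (ZMod 2) C)

/-- The dimension of the kernel of a binary code. -/
noncomputable def kerDim {α β : ℕ} (C : Set (Bin α β)) : ℕ :=
  Module.finrank (ZMod 2) (Submodule.span (ZMod 2) (kernelK C))

/-- A `Z2Z4`-additive code `C ⊆ Z2^α × Z4^β` is of type `(α,β;γ,δ;κ)`: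
`|C| = 2^(γ+2δ)`, the number of elements `x` with `2x = 0` is `2^(γ+δ)`, and `κ` is the
`Z2`-dimension of the projection onto the first `α` coordinates of `{x ∈ C | 2x = 0}`. -/
def IsTypeOf (α β γ δ κ : ℕ) (C : AddSubgroup (Amb α β)) : Prop :=
  Nat.card C = 2 ^ (γ + 2 * δ) ∧
  Nat.card {x : Amb α β | x ∈ C ∧ 2 • x = 0} = 2 ^ (γ + δ) ∧
  Module.finrank (ZMod 2)
    (Submodule.span (ZMod 2) (Prod.fst '' {x : Amb α β | x ∈ C ∧ 2 • x = 0})) = κ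

section TwiceProducts

variable {R : Type*} [CommRing R]

def twiceProducts (C : AddSubgroup R) : Set R :=
  {w | ∃ u ∈ C, ∃ v ∈ C, w = 2 * (u * v)}

variable {C : AddSubgroup R}

lemma two_mul_eq_zero_of_mem_closure_twiceProducts (h4 : (4 : R) = 0) {d : R}
    (hd : d ∈ AddSubgroup.closure (twiceProducts C)) : 2 * d = 0 := by
  have hle : AddSubgroup.closure (twiceProducts C) ≤ (AddMonoidHom.mulLeft (2 : R)).ker := by
    rw [AddSubgroup.closure_le]
    rintro _ ⟨u, -, v, -, rfl⟩
    change 2 * (2 * (u * v)) = 0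
    linear_combination (u * v) * h4
  exact hle hd

lemma two_mul_mul_mem_closure_union_twiceProducts (h4 : (4 : R) = 0) {s t : R}
    (hs : s ∈ AddSubgroup.closure (C ∪ twiceProducts C))
    (ht : t ∈ AddSubgroup.closure (C ∪ twiceProducts C)) :
    2 * (s * t) ∈ AddSubgroup.closure (C ∪ twiceProducts C) := by
  rw [AddSubgroup.closure_union, AddSubgroup.closure_eq] at hs ht ⊢
  obtain ⟨c, hc, d, hd, rfl⟩ := AddSubgroup.mem_sup.mp hs
  obtain ⟨c', hc', d', hd', rfl⟩ := AddSubgroup.mem_sup.mp ht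
  have h2d := two_mul_eq_zero_of_mem_closure_twiceProducts h4 hd
  have h2d' := two_mul_eq_zero_of_mem_closure_twiceProducts h4 hd'
  have hexpand : 2 * ((c + d) * (c' + d')) = 2 * (c * c') := by
    linear_combination (c' + d') * h2d + c * h2d'
  rw [hexpand]
  exact AddSubgroup.mem_sup_right (AddSubgroup.subset_closure ⟨c, hc, c', hc', rfl⟩)

end TwiceProducts

section Gray

variable {α β : ℕ}

lemma Amb.four_eq_zero : (4 : Amb α β) = 0 := by
  ext i
  · exact (by decide : (4 : ZMod 2) = 0)
  · exact (by decide : (4 : ZMod 4) = 0)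

lemma grayPair_add (a b : ZMod 4) :
    grayPair (a + b) = grayPair a + grayPair b + grayPair (2 * (a * b)) := by
  decide +revert

@[simp]
lemma Phi_zero : Phi (0 : Amb α β) = 0 :=
  Prod.ext rfl <| funext fun _ => (by decide : grayPair 0 = 0)

lemma Phi_add (u v : Amb α β) : Phi (u + v) = Phi u + Phi v + Phi (2 * (u * v)) := by
  refine Prod.ext (funext fun i => ?_) (funext fun i => grayPair_add (u.2 i) (v.2 i))
  exact (by decide : ∀ a b : ZMod 2, a + b = a + b + 2 * (a * b)) (u.1 i) (v.1 i)

lemma Phi_add_of_two_mul_mul_eq_zero {u v : Amb α β} (h : 2 * (u * v) = 0) :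
    Phi (u + v) = Phi u + Phi v := by
  rw [Phi_add, h, Phi_zero, add_zero]

lemma Phi_two_mul_mul (u v : Amb α β) : Phi (2 * (u * v)) = Phi (u + v) + Phi u + Phi v := by
  calc Phi (2 * (u * v)) = Phi (2 * (u * v)) + (Phi u + Phi u) + (Phi v + Phi v) := by
        rw [ZModModule.add_self, ZModModule.add_self, add_zero, add_zero]
    _ = Phi (u + v) + Phi u + Phi v := by rw [Phi_add]; abel

lemma Phi_add_Phi (u v : Amb α β) : Phi u + Phi v = Phi (u + v + 2 * (u * v)) := by
  have hvanish : 2 * ((u + v) * (2 * (u * v))) = 0 := by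
    linear_combination ((u + v) * (u * v)) * (Amb.four_eq_zero : (4 : Amb α β) = 0)
  rw [Phi_add_of_two_mul_mul_eq_zero hvanish, Phi_add, add_assoc, ZModModule.add_self, add_zero]

end Gray

section GrayImage

variable {α β : ℕ}

lemma span_Phi_image_subset_Phi_image {C : Set (Amb α β)} {S : AddSubgroup (Amb α β)}
    (hCS : C ⊆ S) (hS : ∀ s ∈ S, ∀ t ∈ S, 2 * (s * t) ∈ S) :
    (Submodule.span (ZMod 2) (Phi '' C) : Set (Bin α β)) ⊆ Phi '' S := by
  let N : AddSubgroup (Bin α β) :=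
    { carrier := Phi '' S
      add_mem' := by
        rintro _ _ ⟨s, hs, rfl⟩ ⟨t, ht, rfl⟩
        exact ⟨_, add_mem (add_mem hs ht) (hS s hs t ht), (Phi_add_Phi s t).symm⟩
      zero_mem' := ⟨0, S.zero_mem, Phi_zero⟩
      neg_mem' := fun hx => by rwa [ZModModule.neg_eq_self] }
  exact (Submodule.span_le (p := AddSubgroup.toZModSubmodule 2 N)).mpr (Set.image_mono hCS)

variable (C : AddSubgroup (Amb α β))

lemma Phi_mem_span_of_mem_closure_twiceProducts {d : Amb α β}
    (hd : d ∈ AddSubgroup.closure (twiceProducts C)) :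
    Phi d ∈ Submodule.span (ZMod 2) (Phi '' (C : Set (Amb α β))) := by
  have hC : ∀ {c}, c ∈ C → Phi c ∈ Submodule.span (ZMod 2) (Phi '' (C : Set (Amb α β))) :=
    fun hc => Submodule.subset_span (Set.mem_image_of_mem _ hc)
  induction hd using AddSubgroup.closure_induction with
  | mem _ hw =>
    obtain ⟨u, hu, v, hv, rfl⟩ := hw
    rw [Phi_two_mul_mul]
    exact add_mem (add_mem (hC (add_mem hu hv)) (hC hu)) (hC hv)
  | zero => simp
  | add x y hx _ ihx ihy =>
    have h2x := two_mul_eq_zero_of_mem_closure_twiceProducts Amb.four_eq_zero hx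
    rw [Phi_add_of_two_mul_mul_eq_zero (by rw [← mul_assoc, h2x, zero_mul])]
    exact add_mem ihx ihy
  | neg x hx ihx =>
    have h2x := two_mul_eq_zero_of_mem_closure_twiceProducts Amb.four_eq_zero hx
    rwa [neg_eq_of_add_eq_zero_left (by rwa [← two_mul])]

lemma Phi_image_closure_subset_span :
    Phi '' (AddSubgroup.closure (C ∪ twiceProducts C) : Set (Amb α β)) ⊆
      Submodule.span (ZMod 2) (Phi '' (C : Set (Amb α β))) := by
  rintro _ ⟨s, hs, rfl⟩
  rw [SetLike.mem_coe, AddSubgroup.closure_union, AddSubgroup.closure_eq] at hs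
  obtain ⟨c, hc, d, hd, rfl⟩ := AddSubgroup.mem_sup.mp hs
  have h2d := two_mul_eq_zero_of_mem_closure_twiceProducts Amb.four_eq_zero hd
  rw [Phi_add_of_two_mul_mul_eq_zero (by rw [mul_left_comm, h2d, mul_zero])]
  exact add_mem (Submodule.subset_span (Set.mem_image_of_mem _ hc))
    (Phi_mem_span_of_mem_closure_twiceProducts C hd)

end GrayImage

/-- the subgroup generated by `𝒞` and all `2(u*v)` maps under `Φ` onto the
linear span of `Φ(𝒞)`; in particular, the span of a `Z2Z4`-linear code is `Z2Z4`-linear. -/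
theorem gray_image_of_span_subgroup (α β : ℕ) (C : AddSubgroup (Amb α β)) :
    Phi '' (AddSubgroup.closure
        ((C : Set (Amb α β)) ∪ {w | ∃ u ∈ C, ∃ v ∈ C, w = 2 * (u * v)}) : Set (Amb α β)) =
      (Submodule.span (ZMod 2) (Phi '' (C : Set (Amb α β))) : Set (Bin α β)) :=
  (Phi_image_closure_subset_span C).antisymm <|
    span_Phi_image_subset_Phi_image (Set.subset_union_left.trans AddSubgroup.subset_closure)
      fun _ hs _ ht => two_mul_mul_mem_closure_union_twiceProducts Amb.four_eq_zero hs ht
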